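/- Let F be a field and A = F[y,z]/(yz). Let N be a finitely generated graded A-module which is Cohen–Macaulay of dimension 1 and has multiplicity 1, i.e. length_{A_{(y)}}(N_{(y)}) + length_{A_{(z)}}(N_{(z)}) = 1. Then N is isomorphic, up to shift of grading, to A/(z) = F[y] or A/(y) = F[z]. -/

import Mathlib

set_option synthInstance.maxHeartbeats 1000000
set_option maxHeartbeats 2000000

open MvPolynomial

noncomputable section

variable (F : Type) [Field F]

/-- The ring `A = F[y,z]/(yz)`. -/
abbrev RingA := MvPolynomial (Fin 2) F ⧸
  Ideal.span {(X 0 : MvPolynomial (Fin 2) F) * X 1}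

/-- `y ∈ A`. -/
def yA : RingA F := Ideal.Quotient.mk _ (X 0)

/-- `z ∈ A`. -/
def zA : RingA F := Ideal.Quotient.mk _ (X 1)

variable {F}

lemma yz_mul : yA F * zA F = 0 := by
  have h : (Ideal.Quotient.mk (Ideal.span {(X 0 : MvPolynomial (Fin 2) F) * X 1})
      ((X 0 : MvPolynomial (Fin 2) F) * X 1)) = 0 := by
    rw [Ideal.Quotient.eq_zero_iff_mem]
    exact Ideal.subset_span rfl
  rw [map_mul] at h
  exact h

lemma decompY (a : RingA F) :
    ∃ p : Polynomial F, a - Polynomial.aeval (yA F) p ∈ Ideal.span {zA F} := by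
  obtain ⟨r, rfl⟩ := Ideal.Quotient.mk_surjective a
  induction r using MvPolynomial.induction_on with
  | C c =>
      refine ⟨Polynomial.C c, ?_⟩
      have : (Ideal.Quotient.mk _ (MvPolynomial.C c : MvPolynomial (Fin 2) F))
          = Polynomial.aeval (yA F) (Polynomial.C c) := by
        simp [Polynomial.aeval_C]
        rfl
      rw [this, sub_self]
      exact Submodule.zero_mem _
  | add p q hp hq =>
      obtain ⟨p1, hp1⟩ := hp
      obtain ⟨q1, hq1⟩ := hq
      refine ⟨p1 + q1, ?_⟩
      have : Ideal.Quotient.mk (Ideal.span {(X 0 : MvPolynomial (Fin 2) F) * X 1}) (p + q)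
          - Polynomial.aeval (yA F) (p1 + q1)
          = (Ideal.Quotient.mk _ p - Polynomial.aeval (yA F) p1)
            + (Ideal.Quotient.mk _ q - Polynomial.aeval (yA F) q1) := by
        rw [map_add, map_add]; ring
      rw [this]
      exact Submodule.add_mem _ hp1 hq1
  | mul_X p n hp =>
      obtain ⟨p1, hp1⟩ := hp
      fin_cases n
      · refine ⟨p1 * Polynomial.X, ?_⟩
        show Ideal.Quotient.mk (Ideal.span {(X 0 : MvPolynomial (Fin 2) F) * X 1}) (p * X 0)
            - Polynomial.aeval (yA F) (p1 * Polynomial.X) ∈ Ideal.span {zA F}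
        have : Ideal.Quotient.mk (Ideal.span {(X 0 : MvPolynomial (Fin 2) F) * X 1}) (p * X 0)
            - Polynomial.aeval (yA F) (p1 * Polynomial.X)
            = (Ideal.Quotient.mk _ p - Polynomial.aeval (yA F) p1) * yA F := by
          rw [map_mul, map_mul, Polynomial.aeval_X]
          show _ = _
          rw [sub_mul]
          rfl
        rw [this]
        exact Ideal.mul_mem_right _ _ hp1
      · refine ⟨0, ?_⟩
        rw [map_zero, sub_zero, map_mul]
        rw [Ideal.mem_span_singleton]
        exact ⟨Ideal.Quotient.mk _ p, mul_comm _ _⟩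

lemma decompZ (a : RingA F) :
    ∃ p : Polynomial F, a - Polynomial.aeval (zA F) p ∈ Ideal.span {yA F} := by
  obtain ⟨r, rfl⟩ := Ideal.Quotient.mk_surjective a
  induction r using MvPolynomial.induction_on with
  | C c =>
      refine ⟨Polynomial.C c, ?_⟩
      have : (Ideal.Quotient.mk _ (MvPolynomial.C c : MvPolynomial (Fin 2) F))
          = Polynomial.aeval (zA F) (Polynomial.C c) := by
        simp [Polynomial.aeval_C]
        rfl
      rw [this, sub_self]
      exact Submodule.zero_mem _
  | add p q hp hq =>
      obtain ⟨p1, hp1⟩ := hp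
      obtain ⟨q1, hq1⟩ := hq
      refine ⟨p1 + q1, ?_⟩
      have : Ideal.Quotient.mk (Ideal.span {(X 0 : MvPolynomial (Fin 2) F) * X 1}) (p + q)
          - Polynomial.aeval (zA F) (p1 + q1)
          = (Ideal.Quotient.mk _ p - Polynomial.aeval (zA F) p1)
            + (Ideal.Quotient.mk _ q - Polynomial.aeval (zA F) q1) := by
        rw [map_add, map_add]; ring
      rw [this]
      exact Submodule.add_mem _ hp1 hq1
  | mul_X p n hp =>
      obtain ⟨p1, hp1⟩ := hp
      fin_cases n
      · refine ⟨0, ?_⟩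
        rw [map_zero, sub_zero, map_mul]
        rw [Ideal.mem_span_singleton]
        exact ⟨Ideal.Quotient.mk _ p, mul_comm _ _⟩
      · refine ⟨p1 * Polynomial.X, ?_⟩
        show Ideal.Quotient.mk (Ideal.span {(X 0 : MvPolynomial (Fin 2) F) * X 1}) (p * X 1)
            - Polynomial.aeval (zA F) (p1 * Polynomial.X) ∈ Ideal.span {yA F}
        have : Ideal.Quotient.mk (Ideal.span {(X 0 : MvPolynomial (Fin 2) F) * X 1}) (p * X 1)
            - Polynomial.aeval (zA F) (p1 * Polynomial.X)
            = (Ideal.Quotient.mk _ p - Polynomial.aeval (zA F) p1) * zA F := by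
          rw [map_mul, map_mul, Polynomial.aeval_X]
          show _ = _
          rw [sub_mul]
          rfl
        rw [this]
        exact Ideal.mul_mem_right _ _ hp1

lemma key {N : Type} [AddCommGroup N] [Module F N] [Module (RingA F) N]
    [IsScalarTower F (RingA F) N]
    (hCM : ∀ S : Submodule (RingA F) N,
      Module.Finite F ↥(S.restrictScalars F) → S = ⊥)
    (u v : RingA F)
    (hdecomp : ∀ a : RingA F, ∃ p : Polynomial F,
      a - Polynomial.aeval u p ∈ Ideal.span {v})
    (m : N) (hvm : v • m = 0) (s : RingA F) (hs : s ∉ Ideal.span {v})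
    (hsm : s • m = 0) : m = 0 := by
  classical
  obtain ⟨p₀, hp₀⟩ := hdecomp s
  have hp₀ne : p₀ ≠ 0 := by
    rintro rfl
    rw [map_zero, sub_zero] at hp₀
    exact hs hp₀
  have hrep : ∀ a : RingA F, ∃ p : Polynomial F,
      a • m = (Polynomial.aeval u p) • m := by
    intro a
    obtain ⟨p, hp⟩ := hdecomp a
    rw [Ideal.mem_span_singleton] at hp
    obtain ⟨c, hc⟩ := hp
    refine ⟨p, ?_⟩
    have ha : a = Polynomial.aeval u p + c * v := by
      rw [sub_eq_iff_eq_add] at hc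
      rw [hc]; ring
    rw [ha, add_smul, mul_smul, hvm, smul_zero, add_zero]
  set q : Polynomial F := p₀ * Polynomial.C (p₀.leadingCoeff)⁻¹ with hqdef
  have hq : q.Monic := Polynomial.monic_mul_leadingCoeff_inv hp₀ne
  have hzero : (Polynomial.aeval u q) • m = 0 := by
    have h1 : (Polynomial.aeval u p₀) • m = 0 := by
      rw [Ideal.mem_span_singleton] at hp₀
      obtain ⟨c, hc⟩ := hp₀
      have : Polynomial.aeval u p₀ = s - c * v := by
        rw [sub_eq_iff_eq_add] at hc
        rw [eq_sub_iff_add_eq, hc]; ring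
      rw [this, sub_smul, hsm, mul_smul, hvm, smul_zero, sub_zero]
    rw [hqdef, map_mul, mul_comm ((Polynomial.aeval u) p₀), mul_smul, h1, smul_zero]
  set φ : Polynomial F →ₗ[F] N :=
    ((LinearMap.toSpanSingleton (RingA F) N m).restrictScalars F).comp
      (Polynomial.aeval u).toLinearMap with hφdef
  have hφ : ∀ p : Polynomial F, φ p = (Polynomial.aeval u p) • m := fun p => rfl
  have heq : (Submodule.span (RingA F) {m}).restrictScalars F
      = Submodule.map φ (Polynomial.degreeLT F q.natDegree) := by
    apply le_antisymm
    · intro x hx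
      rw [Submodule.restrictScalars_mem, Submodule.mem_span_singleton] at hx
      obtain ⟨a, rfl⟩ := hx
      obtain ⟨p, hp⟩ := hrep a
      refine Submodule.mem_map.mpr ⟨p %ₘ q, ?_, ?_⟩
      · rw [Polynomial.mem_degreeLT]
        rw [← Polynomial.degree_eq_natDegree hq.ne_zero]
        exact Polynomial.degree_modByMonic_lt p hq
      · have e1 : (Polynomial.aeval u (p %ₘ q)) • m = (Polynomial.aeval u p) • m := by
          conv_rhs => rw [← Polynomial.modByMonic_add_div p q]
          rw [map_add, add_smul, map_mul, mul_comm ((Polynomial.aeval u) q), mul_smul, hzero, smul_zero, add_zero]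
        rw [hφ, e1, ← hp]
    · rintro x hx
      obtain ⟨p, -, rfl⟩ := Submodule.mem_map.mp hx
      rw [Submodule.restrictScalars_mem]
      rw [hφ]
      exact Submodule.smul_mem _ _ (Submodule.mem_span_singleton_self m)
  have hfg : (Polynomial.degreeLT F q.natDegree).FG := by
    rw [Polynomial.degreeLT_eq_span_X_pow]
    exact ⟨_, rfl⟩
  have hfin : Module.Finite F ↥((Submodule.span (RingA F) {m}).restrictScalars F) := by
    rw [heq]
    exact Module.Finite.iff_fg.mpr (Submodule.FG.map _ hfg)
  have hbot := hCM _ hfin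
  have : m ∈ (⊥ : Submodule (RingA F) N) := hbot ▸ Submodule.mem_span_singleton_self m
  simpa using this

lemma main_aux {N : Type} [AddCommGroup N] [Module F N] [Module (RingA F) N]
    [IsScalarTower F (RingA F) N] [Module.Finite (RingA F) N] [Nontrivial N]
    (hCM : ∀ S : Submodule (RingA F) N,
      Module.Finite F ↥(S.restrictScalars F) → S = ⊥)
    (u v : RingA F) (huv : u * v = 0)
    (hdu : ∀ a : RingA F, ∃ p : Polynomial F,
      a - Polynomial.aeval u p ∈ Ideal.span {v})
    (hdv : ∀ a : RingA F, ∃ p : Polynomial F,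
      a - Polynomial.aeval v p ∈ Ideal.span {u})
    (hPu : (Ideal.span {u}).IsPrime) (hPv : (Ideal.span {v}).IsPrime) :
    letI := hPu
    letI := hPv
    IsSimpleModule (Localization (Ideal.span {u}).primeCompl)
        (LocalizedModule (Ideal.span {u}).primeCompl N) →
    Subsingleton (LocalizedModule (Ideal.span {v}).primeCompl N) →
    Nonempty (N ≃ₗ[RingA F] RingA F ⧸ Ideal.span {u}) := by
  letI := hPu
  letI := hPv
  intro hsimple hzero
  classical
  -- Step 1 : `u` kills `N`.
  have huN : ∀ n : N, u • n = 0 := by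
    intro n
    have h0 : (LocalizedModule.mk n (1 : (Ideal.span {v}).primeCompl)
        : LocalizedModule (Ideal.span {v}).primeCompl N)
        = LocalizedModule.mk 0 1 := Subsingleton.elim _ _
    rw [LocalizedModule.mk_eq] at h0
    obtain ⟨c, hc⟩ := h0
    have hc' : (c : RingA F) • n = 0 := by
      simpa [Submonoid.smul_def] using hc
    have hcm : (c : RingA F) • (u • n) = 0 := by
      rw [smul_comm, hc', smul_zero]
    have hvm : v • (u • n) = 0 := by
      rw [smul_smul, mul_comm v u, huv]; exact zero_smul (RingA F) n
    exact key hCM u v hdu (u • n) hvm (c : RingA F) c.2 hcm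
  -- `N` is a module over `B = A ⧸ (u)`.
  have htors : Module.IsTorsionBySet (RingA F) N (Ideal.span {u} : Ideal (RingA F)) := by
    intro x a
    obtain ⟨c, hc⟩ := Ideal.mem_span_singleton.mp a.2
    show (a : RingA F) • x = 0
    rw [hc, mul_comm u c, mul_smul, huN x, smul_zero]
  letI instB : Module (RingA F ⧸ Ideal.span {u}) N := htors.module
  haveI instTower : IsScalarTower (RingA F) (RingA F ⧸ Ideal.span {u}) N :=
    htors.isScalarTower
  haveI : (Ideal.span {u}).IsPrime := hPu
  haveI : IsDomain (RingA F ⧸ Ideal.span {u}) := Ideal.Quotient.isDomain _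
  -- B is a principal ideal ring via the surjection from `F[X]`.
  have hsurj : Function.Surjective
      ((Ideal.Quotient.mk (Ideal.span {u})).comp
        ((Polynomial.aeval v : Polynomial F →ₐ[F] RingA F) : Polynomial F →+* RingA F)) := by
    intro b
    obtain ⟨r, rfl⟩ := Ideal.Quotient.mk_surjective b
    obtain ⟨p, hp⟩ := hdv r
    exact ⟨p, (Ideal.Quotient.eq.mpr hp).symm⟩
  haveI : IsPrincipalIdealRing (RingA F ⧸ Ideal.span {u}) :=
    IsPrincipalIdealRing.of_surjective _ hsurj
  -- `N` is finite over `B`.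
  haveI : Module.Finite (RingA F ⧸ Ideal.span {u}) N :=
    Module.Finite.of_restrictScalars_finite (RingA F) (RingA F ⧸ Ideal.span {u}) N
  -- `N` is torsion-free over `B`.
  haveI : NoZeroSMulDivisors (RingA F ⧸ Ideal.span {u}) N := by
    refine ⟨fun {b x} hbx => ?_⟩
    obtain ⟨a, rfl⟩ := Ideal.Quotient.mk_surjective b
    by_cases ha : a ∈ Ideal.span {u}
    · exact Or.inl (Ideal.Quotient.eq_zero_iff_mem.mpr ha)
    · refine Or.inr ?_
      have hax : a • x = 0 := by
        rw [← Module.IsTorsionBySet.mk_smul htors a x]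
        exact hbx
      exact key hCM v u hdv x (huN x) a ha hax
  haveI : Module.Free (RingA F ⧸ Ideal.span {u}) N :=
    Module.free_of_finite_type_torsion_free' (R := RingA F ⧸ Ideal.span {u}) (M := N)
  set ι := Module.Free.ChooseBasisIndex (RingA F ⧸ Ideal.span {u}) N with hι
  set b := Module.Free.chooseBasis (RingA F ⧸ Ideal.span {u}) N with hb
  haveI : Nonempty ι := inferInstance
  -- the index type has at most one element, by simplicity of the localization
  have hsub : ∀ i j : ι, i = j := by
    intro i j
    by_contra hij
    set P : Submodule (Localization (Ideal.span {u}).primeCompl)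
        (LocalizedModule (Ideal.span {u}).primeCompl N) :=
      Submodule.span _ {LocalizedModule.mk (b i) 1} with hP
    have hPbot : P ≠ ⊥ := by
      rw [hP, Ne, Submodule.span_singleton_eq_bot]
      intro h0
      rw [show (0 : LocalizedModule (Ideal.span {u}).primeCompl N)
          = LocalizedModule.mk 0 1 from (LocalizedModule.zero_mk 1).symm,
        LocalizedModule.mk_eq] at h0
      obtain ⟨c, hc⟩ := h0
      have hc' : (c : RingA F) • (b i) = 0 := by
        simpa [Submonoid.smul_def] using hc
      have hmk : (Ideal.Quotient.mk (Ideal.span {u}) (c : RingA F)) • (b i) = (0 : N) := by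
        rw [Module.IsTorsionBySet.mk_smul htors]
        exact hc'
      rcases smul_eq_zero.mp hmk with h | h
      · exact c.2 (Ideal.Quotient.eq_zero_iff_mem.mp h)
      · exact Module.Basis.ne_zero b i h
    have hPtop : P ≠ ⊤ := by
      intro htop
      have hmem : (LocalizedModule.mk (b j) 1
          : LocalizedModule (Ideal.span {u}).primeCompl N) ∈ P :=
        htop ▸ Submodule.mem_top
      rw [hP, Submodule.mem_span_singleton] at hmem
      obtain ⟨r, hr⟩ := hmem
      obtain ⟨⟨a, t⟩, (hat : IsLocalization.mk' (Localization (Ideal.span {u}).primeCompl) a t = r)⟩ := IsLocalization.mk'_surjective (Ideal.span {u}).primeCompl r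
      rw [← hat, ← Localization.mk_eq_mk', LocalizedModule.mk_smul_mk] at hr
      rw [LocalizedModule.mk_eq] at hr
      obtain ⟨c, hc⟩ := hr
      have hN : ((c : RingA F) * a) • (b i) = ((c : RingA F) * (t : RingA F)) • (b j) := by
        simp only [Submonoid.smul_def, Submonoid.coe_one, OneMemClass.coe_one, one_smul,
          mul_one, one_mul, Submonoid.coe_mul, smul_smul] at hc
        exact hc
      have h1 : (Ideal.Quotient.mk (Ideal.span {u}) ((c : RingA F) * a)) • (b i)
          = (Ideal.Quotient.mk (Ideal.span {u}) ((c : RingA F) * (t : RingA F))) • (b j) := by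
        rw [Module.IsTorsionBySet.mk_smul htors, Module.IsTorsionBySet.mk_smul htors]
        exact hN
      have h2 := congrArg (fun w => (b.repr w) j) h1
      simp only [map_smul, Module.Basis.repr_self, Finsupp.smul_single, smul_eq_mul, mul_one,
        Finsupp.smul_apply, Finsupp.single_apply, if_neg hij, if_pos rfl, if_pos trivial] at h2
      have hmem2 : (c : RingA F) * (t : RingA F) ∈ Ideal.span {u} := by
        rw [← Ideal.Quotient.eq_zero_iff_mem]
        convert h2.symm using 1
        exact (mul_one (Ideal.Quotient.mk (Ideal.span {u}) ((c : RingA F) * (t : RingA F)))).symm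
      rcases hPu.mem_or_mem hmem2 with h | h
      · exact c.2 h
      · exact t.2 h
    haveI := hsimple
    rcases eq_bot_or_eq_top P with h | h
    · exact hPbot h
    · exact hPtop h
  haveI : Subsingleton ι := ⟨hsub⟩
  obtain ⟨i0⟩ := ‹Nonempty ι›
  haveI : Unique ι := ⟨⟨i0⟩, fun j => hsub j i0⟩
  let e : N ≃ₗ[RingA F ⧸ Ideal.span {u}] (RingA F ⧸ Ideal.span {u}) :=
    b.repr.trans (Finsupp.LinearEquiv.finsuppUnique _ _ _)
  exact ⟨e.restrictScalars (RingA F)⟩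

variable (F)

/-
STATEMENT 9: Let `F` be a field and `A = F[y,z]/(yz)`.  Let `N` be a
finitely generated graded `A`-module which is Cohen–Macaulay of dimension 1
and has multiplicity 1, i.e.
`length_{A_(y)}(N_(y)) + length_{A_(z)}(N_(z)) = 1`.
Then `N` is isomorphic, up to shift of grading, to `A/(z) = F[y]` or
`A/(y) = F[z]`.

Grading and the Cohen–Macaulay condition are encoded as in the context
(see STATEMENT 8): a decomposition `ℳ : ℤ → Submodule F N` with
`y·ℳ n ⊆ ℳ(n+1)`, `z·ℳ n ⊆ ℳ(n+1)`; CM of dimension 1 ⟺ `N ≠ 0` with no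
nonzero finite-dimensional submodule.  "Sum of the lengths equals 1" is
expressed by saying that one localization is a simple module and the other
is zero.  A shift of grading does not change the underlying `A`-module, so
the conclusion is stated as an isomorphism of `A`-modules. -/
theorem stmt9
    (N : Type) [AddCommGroup N] [Module F N] [Module (RingA F) N]
    [IsScalarTower F (RingA F) N]
    (ℳ : ℤ → Submodule F N) [DirectSum.Decomposition ℳ]
    (hgy : ∀ (n : ℤ), ∀ x ∈ ℳ n, yA F • x ∈ ℳ (n + 1))
    (hgz : ∀ (n : ℤ), ∀ x ∈ ℳ n, zA F • x ∈ ℳ (n + 1))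
    [Module.Finite (RingA F) N] [Nontrivial N]
    (hCM : ∀ S : Submodule (RingA F) N,
      Module.Finite F ↥(S.restrictScalars F) → S = ⊥)
    (hPy : (Ideal.span {yA F}).IsPrime) (hPz : (Ideal.span {zA F}).IsPrime) :
    letI := hPy
    letI := hPz
    -- multiplicity 1: the two local lengths sum to 1
    ((IsSimpleModule (Localization (Ideal.span {yA F}).primeCompl)
        (LocalizedModule (Ideal.span {yA F}).primeCompl N) ∧
      Subsingleton (LocalizedModule (Ideal.span {zA F}).primeCompl N)) ∨
     (Subsingleton (LocalizedModule (Ideal.span {yA F}).primeCompl N) ∧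
      IsSimpleModule (Localization (Ideal.span {zA F}).primeCompl)
        (LocalizedModule (Ideal.span {zA F}).primeCompl N))) →
    (Nonempty (N ≃ₗ[RingA F] (RingA F ⧸ Ideal.span {zA F})) ∨
     Nonempty (N ≃ₗ[RingA F] (RingA F ⧸ Ideal.span {yA F}))) := by
  intro hmult
  rcases hmult with ⟨hs, hz⟩ | ⟨hz, hs⟩
  · exact Or.inr (main_aux hCM (yA F) (zA F) yz_mul decompY decompZ hPy hPz hs hz)
  · exact Or.inl (main_aux hCM (zA F) (yA F) (by rw [mul_comm]; exact yz_mul)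
      decompZ decompY hPz hPy hs hz)

end
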